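/- arXiv:2305.04698 — 4 statements merged into one kernel-verified Lean document; each statement's English description precedes it below -/
import Mathlib

section
/- Let p be a prime, m ≥ 1 and 1 ≤ s ≤ m integers, λ a positive integer with p ∣ λ, and π a permutation of {s, s+1, …, m}. Fix g_1, …, g_m, g ∈ ℤ_λ and an arbitrary function h : ℤ_p^{s−1} → ℤ_λ (with h = 0 when s = 1). Define f : ℤ_p^m → ℤ_λ by f(v_1, …, v_m) = (λ/p)·Σ_{i=s}^{m−1} v_{π(i)} v_{π(i+1)} + Σ_{i=1}^{m} g_i v_i + g + h(v_1, …, v_{s−1}) (mod λ), and for each γ ∈ ℤ_p define a^γ = f + (λ/p)·v_{π(s)}·γ (mod λ). Then for every integer τ with 0 < τ < p^m and p^{s−1} ∣ τ, Σ_{γ=0}^{p−1} ρ(ψ(a^γ))(τ) = 0; that is, the set {ψ(a^γ) : γ ∈ ℤ_p} is a (p, p^m, p^{s−1})-multiple shift complementary set. -/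
/-!
Write `v` and `u` for the digit vectors of `i` and `i + τ`; the summed correlation is
`∑ i ∑ γ ω^(a^γ(v) - a^γ(u))`. If `v (π s) ≠ u (π s)`, the inner sum runs over a nontrivial
character of order `p` in `γ` and vanishes. Otherwise, as `p ^ (s - 1) ∣ τ` the low digits of `i`
and `i + τ` agree, so there is a first `t > s` with `v (π t) ≠ u (π t)`. Setting the digit at
position `π (t - 1)` of both `i` and `i + τ` to any `c` keeps their difference `τ` and the index
`t`, and shifts `a^γ(v) - a^γ(u)` by `(λ / p) c (v (π t) - u (π t))`: the terms over each such
orbit of `p` indices sum to zero.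
-/

open Finset

/-- `eZMod q x = ω_q^x` where `ω_q = exp(2π√-1/q)`. -/
noncomputable def eZMod (q : ℕ) (x : ZMod q) : ℂ :=
  Complex.exp (2 * (Real.pi : ℂ) * Complex.I * (x.val : ℂ) / (q : ℂ))

/-- Aperiodic autocorrelation of a sequence of length `L` at shift `τ`. -/
noncomputable def aacf (L : ℕ) (a : ℕ → ℂ) (τ : ℕ) : ℂ :=
  ∑ i ∈ Finset.range (L - τ), a i * (starRingEnd ℂ) (a (i + τ))

/-- `dig p i k` is the `k`-th base-`p` digit (1-indexed) of `i`, viewed in `ℤ_p`. -/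
def dig (p i : ℕ) (k : ℕ) : ZMod p :=
  (((i / p ^ (k - 1)) % p : ℕ) : ZMod p)

open scoped ComplexConjugate

lemma eZMod_eq_stdAddChar {N : ℕ} [NeZero N] (x : ZMod N) : eZMod N x = ZMod.stdAddChar x := by
  rw [ZMod.stdAddChar_apply, ZMod.toCircle_apply]; rfl

lemma conj_eZMod {N : ℕ} [NeZero N] (x : ZMod N) : conj (eZMod N x) = eZMod N (-x) := by
  rw [eZMod_eq_stdAddChar, eZMod_eq_stdAddChar, ZMod.stdAddChar_apply, ZMod.stdAddChar_apply,
    AddChar.map_neg_eq_inv, Circle.coe_inv_eq_conj]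

lemma sum_range_eZMod_add_mul_eq_zero {N p : ℕ} [NeZero N] (A K : ZMod N) (hK : K ≠ 0)
    (hpK : (p : ZMod N) * K = 0) :
    ∑ c ∈ range p, eZMod N (A + c * K) = 0 := by
  have hζ : eZMod N K ≠ 1 := by
    rwa [eZMod_eq_stdAddChar, ← AddChar.map_zero_eq_one (ZMod.stdAddChar (N := N)),
      ZMod.injective_stdAddChar.ne_iff]
  have hζp : eZMod N K ^ p = 1 := by
    rw [eZMod_eq_stdAddChar, ← AddChar.map_nsmul_eq_pow, nsmul_eq_mul, hpK,
      AddChar.map_zero_eq_one]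
  simp_rw [eZMod_eq_stdAddChar, AddChar.map_add_eq_mul, ← nsmul_eq_mul,
    AddChar.map_nsmul_eq_pow, ← mul_sum, ← eZMod_eq_stdAddChar, geom_sum_eq hζ, hζp]
  simp

lemma natCast_div_mul_val_sub_val_ne_zero {p N : ℕ} (hN : 0 < N) (hpN : p ∣ N) {x y : ZMod p}
    (hxy : x ≠ y) : ((N / p : ℕ) : ZMod N) * ((x.val : ZMod N) - y.val) ≠ 0 := by
  obtain ⟨q, rfl⟩ := hpN
  have hp : 0 < p := Nat.pos_of_mul_pos_right hN
  have hq : (q : ℤ) ≠ 0 := by exact_mod_cast (Nat.pos_of_mul_pos_left hN).ne'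
  rw [Nat.mul_div_cancel_left q hp]
  intro h0
  have hdvd : ((p * q : ℕ) : ℤ) ∣ q * ((x.val : ℤ) - y.val) := by
    rw [← ZMod.intCast_zmod_eq_zero_iff_dvd]
    push_cast
    exact h0
  rw [Nat.cast_mul, mul_comm (p : ℤ), mul_dvd_mul_iff_left hq,
    ← ZMod.intCast_zmod_eq_zero_iff_dvd] at hdvd
  have : NeZero p := ⟨hp.ne'⟩
  push_cast at hdvd
  rw [ZMod.natCast_zmod_val, ZMod.natCast_zmod_val, sub_eq_zero] at hdvd
  exact hxy hdvd

lemma sum_range_eZMod_add_mul_val_sub_val {p N : ℕ} (hN : 0 < N) (hpN : p ∣ N) {x y : ZMod p}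
    (hxy : x ≠ y) (A : ZMod N) :
    ∑ c ∈ range p, eZMod N (A + c * (((N / p : ℕ) : ZMod N) * ((x.val : ZMod N) - y.val))) = 0 :=
  have : NeZero N := ⟨hN.ne'⟩
  sum_range_eZMod_add_mul_eq_zero _ _ (natCast_div_mul_val_sub_val_ne_zero hN hpN hxy) (by
    rw [← mul_assoc, ← Nat.cast_mul, Nat.mul_div_cancel' hpN, ZMod.natCast_self, zero_mul])

lemma sum_eq_zero_of_sum_orbit_eq_zero {α M : Type*} [AddCommMonoid M] [IsAddTorsionFree M]
    {S : Finset α} {n : ℕ} (hn : n ≠ 0) (σ : α → ℕ → α) (d : α → ℕ) (G : α → M)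
    (hσ : ∀ i ∈ S, ∀ c < n, σ i c ∈ S) (hd : ∀ i ∈ S, d i < n)
    (hσd : ∀ i ∈ S, σ i (d i) = i) (hdσ : ∀ i ∈ S, ∀ c < n, d (σ i c) = c)
    (hσσ : ∀ i ∈ S, ∀ c < n, ∀ c' < n, σ (σ i c) c' = σ i c')
    (horbit : ∀ i ∈ S, ∑ c ∈ range n, G (σ i c) = 0) :
    ∑ i ∈ S, G i = 0 := by
  have hswap : ∑ q ∈ S ×ˢ range n, G q.1 = ∑ q ∈ S ×ˢ range n, G (σ q.1 q.2) := by
    refine sum_nbij' (fun q => (σ q.1 q.2, d q.1)) (fun q => (σ q.1 q.2, d q.1)) ?_ ?_ ?_ ?_ ?_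
    all_goals
      rintro ⟨i, c⟩ hq
      simp only [mem_product, mem_range] at hq ⊢
    · exact ⟨hσ i hq.1 c hq.2, hd i hq.1⟩
    · exact ⟨hσ i hq.1 c hq.2, hd i hq.1⟩
    · rw [hσσ i hq.1 c hq.2 _ (hd i hq.1), hσd i hq.1, hdσ i hq.1 c hq.2]
    · rw [hσσ i hq.1 c hq.2 _ (hd i hq.1), hσd i hq.1, hdσ i hq.1 c hq.2]
    · rw [hσσ i hq.1 c hq.2 _ (hd i hq.1), hσd i hq.1]
  have hn_smul : n • ∑ i ∈ S, G i = 0 := by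
    calc n • ∑ i ∈ S, G i = ∑ q ∈ S ×ˢ range n, G q.1 := by simp [sum_product, smul_sum]
      _ = ∑ i ∈ S, ∑ c ∈ range n, G (σ i c) := by rw [hswap, sum_product]
      _ = 0 := sum_eq_zero horbit
  exact (IsAddTorsionFree.nsmul_right_injective hn).eq_iff.mp (by rw [hn_smul, smul_zero])

section Digits

variable {p : ℕ}

/-- Digits counted from `0`, unlike `dig`: `dig p n x = digit p n (x - 1)` for `x ≥ 1`. -/
def digit (p n k : ℕ) : ℕ := n / p ^ k % p

def setDigit (p n k c : ℕ) : ℕ := n % p ^ k + p ^ k * (c + p * (n / p ^ (k + 1)))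

lemma digit_lt (hp : 0 < p) (n k : ℕ) : digit p n k < p := Nat.mod_lt _ hp

lemma div_pow_eq_digit_add (n k : ℕ) : n / p ^ k = digit p n k + p * (n / p ^ (k + 1)) := by
  rw [digit, pow_succ, ← Nat.div_div_eq_div_mul, Nat.mod_add_div]

lemma setDigit_digit (n k : ℕ) : setDigit p n k (digit p n k) = n := by
  rw [setDigit, ← div_pow_eq_digit_add, Nat.mod_add_div]

lemma digit_add_of_dvd (hp : 0 < p) {j b : ℕ} (hb : p ^ (j + 1) ∣ b) (a : ℕ) :
    digit p (a + b) j = digit p a j := by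
  obtain ⟨b, rfl⟩ := hb
  rw [digit, digit, pow_succ, mul_assoc, Nat.add_mul_div_left _ _ (pow_pos hp j),
    Nat.add_mul_mod_self_left]

lemma add_pow_mul_div_pow {a k : ℕ} (hp : 0 < p) (ha : a < p ^ k) (b : ℕ) :
    (a + p ^ k * b) / p ^ k = b := by
  rw [Nat.add_mul_div_left _ _ (pow_pos hp k), Nat.div_eq_of_lt ha, zero_add]

lemma digit_add_pow_mul {a k j : ℕ} (hp : 0 < p) (ha : a < p ^ k) (hkj : k ≤ j) (b : ℕ) :
    digit p (a + p ^ k * b) j = digit p b (j - k) := by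
  rw [digit, digit, ← Nat.add_sub_cancel' hkj, pow_add, ← Nat.div_div_eq_div_mul,
    add_pow_mul_div_pow hp ha, Nat.add_sub_cancel_left]

lemma digit_setDigit (hp : 0 < p) {c : ℕ} (hc : c < p) (n k j : ℕ) :
    digit p (setDigit p n k c) j = if j = k then c else digit p n j := by
  have hmod : n % p ^ k < p ^ k := Nat.mod_lt _ (pow_pos hp k)
  rcases lt_trichotomy j k with hjk | rfl | hkj
  · have hdvd : p ^ (j + 1) ∣ p ^ k * (c + p * (n / p ^ (k + 1))) :=
      (pow_dvd_pow p hjk).mul_right _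
    conv_rhs => rw [← Nat.mod_add_div n (p ^ k)]
    rw [if_neg hjk.ne, setDigit, digit_add_of_dvd hp hdvd,
      digit_add_of_dvd hp ((pow_dvd_pow p hjk).mul_right _)]
  · rw [if_pos rfl, setDigit, digit_add_pow_mul hp hmod le_rfl, Nat.sub_self, digit, pow_zero,
      Nat.div_one, Nat.add_mul_mod_self_left, Nat.mod_eq_of_lt hc]
  · have hdigit : ∀ a < p, digit p (a + p * (n / p ^ (k + 1))) (j - k) =
        digit p (n / p ^ (k + 1)) (j - k - 1) := fun a ha => by
      simpa only [pow_one] using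
        digit_add_pow_mul (k := 1) hp (by rwa [pow_one]) (by omega : 1 ≤ j - k) (n / p ^ (k + 1))
    conv_rhs => rw [← Nat.mod_add_div n (p ^ k), div_pow_eq_digit_add]
    rw [if_neg hkj.ne', setDigit, digit_add_pow_mul hp hmod hkj.le,
      digit_add_pow_mul hp hmod hkj.le, hdigit c hc, hdigit _ (digit_lt hp n k)]

lemma setDigit_mod_pow (n k c : ℕ) : setDigit p n k c % p ^ k = n % p ^ k := by
  rw [setDigit, Nat.add_mul_mod_self_left, Nat.mod_mod]

lemma setDigit_div_pow_succ (hp : 0 < p) {c : ℕ} (hc : c < p) (n k : ℕ) :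
    setDigit p n k c / p ^ (k + 1) = n / p ^ (k + 1) := by
  rw [setDigit, pow_succ, ← Nat.div_div_eq_div_mul,
    add_pow_mul_div_pow hp (Nat.mod_lt _ (pow_pos hp k)), Nat.add_mul_div_left _ _ hp,
    Nat.div_eq_of_lt hc, zero_add]

lemma setDigit_setDigit (hp : 0 < p) {c : ℕ} (hc : c < p) (n k c' : ℕ) :
    setDigit p (setDigit p n k c) k c' = setDigit p n k c' := by
  rw [setDigit, setDigit_mod_pow, setDigit_div_pow_succ hp hc, setDigit]

lemma setDigit_add_of_digit_eq {n τ k : ℕ} (h : digit p (n + τ) k = digit p n k) (c : ℕ) :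
    setDigit p n k c + τ = setDigit p (n + τ) k c := by
  have key : ∀ n, setDigit p n k c + p ^ k * digit p n k = n + p ^ k * c := fun n => by
    conv_rhs => rw [← setDigit_digit (p := p) n k]
    simp only [setDigit]
    ring
  have h₁ := key n
  have h₂ := key (n + τ)
  rw [h] at h₂
  omega

lemma setDigit_lt (hp : 0 < p) {n m k c : ℕ} (hn : n < p ^ m) (hk : k < m) (hc : c < p) :
    setDigit p n k c < p ^ m := by
  have hm : p ^ m = p ^ (m - (k + 1)) * p ^ (k + 1) := by rw [← pow_add, Nat.sub_add_cancel hk]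
  rw [hm, ← Nat.div_lt_iff_lt_mul (pow_pos hp _)] at hn ⊢
  rwa [setDigit_div_pow_succ hp hc]

lemma eq_of_digit_eq {n n' m : ℕ} (hn : n < p ^ m) (hn' : n' < p ^ m)
    (h : ∀ k < m, digit p n k = digit p n' k) : n = n' := by
  suffices ∀ j ≤ m, n % p ^ j = n' % p ^ j by
    simpa [Nat.mod_eq_of_lt hn, Nat.mod_eq_of_lt hn'] using this m le_rfl
  intro j hj
  induction j with
  | zero => simp only [pow_zero, Nat.mod_one]
  | succ j ih =>
    rw [Nat.mod_pow_succ, Nat.mod_pow_succ, ih (by omega)]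
    exact congrArg _ (congrArg _ (h j (by omega)))

end Digits

open Function

section PathSum

variable {R : Type*} [CommRing R]

def pathSum (π : ℕ → ℕ) (s m : ℕ) (w : ℕ → R) : R := ∑ r ∈ Ico s m, w (π r) * w (π (r + 1))

lemma pathSum_update_sub {π : ℕ → ℕ} (hπ : Injective π) {s t m : ℕ} (hst : s < t) (htm : t ≤ m)
    {v u : ℕ → R} (hvu : ∀ r, s ≤ r → r < t → v (π r) = u (π r)) (c : R) :
    pathSum π s m (update v (π (t - 1)) c) - pathSum π s m (update u (π (t - 1)) c) =
      pathSum π s m (update v (π (t - 1)) 0) - pathSum π s m (update u (π (t - 1)) 0) +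
        c * (v (π t) - u (π t)) := by
  have hterm : ∀ r ∈ Ico s m,
      update v (π (t - 1)) c (π r) * update v (π (t - 1)) c (π (r + 1)) -
          update u (π (t - 1)) c (π r) * update u (π (t - 1)) c (π (r + 1)) =
        update v (π (t - 1)) 0 (π r) * update v (π (t - 1)) 0 (π (r + 1)) -
          update u (π (t - 1)) 0 (π r) * update u (π (t - 1)) 0 (π (r + 1)) +
        if r = t - 1 then c * (v (π t) - u (π t)) else 0 := by
    intro r hr
    rw [mem_Ico] at hr
    simp only [update_apply, hπ.eq_iff]
    by_cases hr₁ : r = t - 1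
    · simp only [hr₁, if_true, show t - 1 + 1 = t by omega, show t ≠ t - 1 by omega, if_false]
      ring
    by_cases hr₂ : r + 1 = t - 1
    · simp only [hr₁, hr₂, if_true, if_false, hvu r hr.1 (by omega)]
      ring
    · simp only [hr₁, hr₂, if_false]
      ring
  simp only [pathSum, ← sum_sub_distrib]
  rw [sum_congr rfl hterm, sum_add_distrib, sum_ite_eq', if_pos (mem_Ico.mpr ⟨by omega, by omega⟩)]

end PathSum

section PathFun

variable {p : ℕ} (lam : ℕ) (π : ℕ → ℕ) (s m : ℕ) (g : ℕ → ZMod lam) (g₀ : ZMod lam)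
  (h : (ℕ → ZMod p) → ZMod lam)

/-- The function `a^γ` of the statement; only the coordinates `v k` with `k ≥ 1` matter. -/
def pathFun (γ : ZMod p) (v : ℕ → ZMod p) : ZMod lam :=
  ((lam / p : ℕ) : ZMod lam) * pathSum π s m (fun k => ((v k).val : ZMod lam)) +
    ∑ k ∈ Icc 1 m, g k * ((v k).val : ZMod lam) + g₀ + h v +
    ((lam / p : ℕ) : ZMod lam) * ((v (π s)).val : ZMod lam) * (γ.val : ZMod lam)

variable {lam π s m}

lemma pathFun_congr (hs : 1 ≤ s) (hsm : s ≤ m) (hπ : ∀ r ∈ Icc s m, π r ∈ Icc s m)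
    (hh : ∀ u w : ℕ → ZMod p, (∀ k, 1 ≤ k → k ≤ s - 1 → u k = w k) → h u = h w)
    {v w : ℕ → ZMod p} (hvw : ∀ k, 1 ≤ k → v k = w k) (γ : ZMod p) :
    pathFun lam π s m g g₀ h γ v = pathFun lam π s m g g₀ h γ w := by
  have hπpos : ∀ r ∈ Icc s m, v (π r) = w (π r) := fun r hr =>
    hvw _ (hs.trans (mem_Icc.mp (hπ r hr)).1)
  have hpath : pathSum π s m (fun k => ((v k).val : ZMod lam)) =
      pathSum π s m (fun k => ((w k).val : ZMod lam)) := by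
    refine sum_congr rfl fun r hr => ?_
    rw [mem_Ico] at hr
    dsimp only
    rw [hπpos r (mem_Icc.mpr ⟨hr.1, hr.2.le⟩), hπpos (r + 1) (mem_Icc.mpr ⟨by omega, hr.2⟩)]
  have hlin : ∑ k ∈ Icc 1 m, g k * ((v k).val : ZMod lam) =
      ∑ k ∈ Icc 1 m, g k * ((w k).val : ZMod lam) :=
    sum_congr rfl fun k hk => by rw [hvw k (mem_Icc.mp hk).1]
  rw [pathFun, pathFun, hpath, hlin, hh v w fun k hk _ => hvw k hk,
    hπpos s (mem_Icc.mpr ⟨le_rfl, hsm⟩)]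

lemma pathFun_sub_pathFun (γ : ℕ) (hγ : γ < p) (v u : ℕ → ZMod p) :
    pathFun lam π s m g g₀ h γ v - pathFun lam π s m g g₀ h γ u =
      (pathFun lam π s m g g₀ h 0 v - pathFun lam π s m g g₀ h 0 u) +
        γ * (((lam / p : ℕ) : ZMod lam) * ((v (π s)).val - (u (π s)).val)) := by
  simp only [pathFun, ZMod.val_cast_of_lt hγ, ZMod.val_zero, Nat.cast_zero]
  ring

lemma pathFun_update_sub_pathFun_update (hπ : Injective π) (hsπ : ∀ r ∈ Icc s m, s ≤ π r)
    (hh : ∀ u w : ℕ → ZMod p, (∀ k, 1 ≤ k → k ≤ s - 1 → u k = w k) → h u = h w)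
    {t : ℕ} (hst : s < t) (htm : t ≤ m) {v u : ℕ → ZMod p}
    (hlow : ∀ k, 1 ≤ k → k ≤ s - 1 → v k = u k) (hvu : ∀ r, s ≤ r → r < t → v (π r) = u (π r))
    (γ : ZMod p) (c : ℕ) (hc : c < p) :
    pathFun lam π s m g g₀ h γ (update v (π (t - 1)) c) -
        pathFun lam π s m g g₀ h γ (update u (π (t - 1)) c) =
      (pathFun lam π s m g g₀ h γ (update v (π (t - 1)) 0) -
        pathFun lam π s m g g₀ h γ (update u (π (t - 1)) 0)) +
      c * (((lam / p : ℕ) : ZMod lam) * ((v (π t)).val - (u (π t)).val)) := by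
  set x := π (t - 1)
  have hx : s ≤ x := hsπ _ (mem_Icc.mpr ⟨by omega, by omega⟩)
  have hlift : ∀ (w : ℕ → ZMod p) (e : ℕ), e < p →
      (fun k => ((update w x (e : ZMod p) k).val : ZMod lam)) =
        update (fun k => ((w k).val : ZMod lam)) x (e : ZMod lam) := by
    intro w e he
    ext k
    rw [apply_update (fun _ (e : ZMod p) => (e.val : ZMod lam)) w x (e : ZMod p) k,
      ZMod.val_cast_of_lt he]
  have hpath := pathSum_update_sub hπ hst htm (v := fun k => ((v k).val : ZMod lam))
    (u := fun k => ((u k).val : ZMod lam)) (fun r h₁ h₂ => by rw [hvu r h₁ h₂]) (c : ZMod lam)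
  rw [← hlift v c hc, ← hlift u c hc, ← Nat.cast_zero, ← hlift v 0 (by omega),
    ← hlift u 0 (by omega), Nat.cast_zero] at hpath
  have hpt : ∀ k, ((update v x (c : ZMod p) k).val : ZMod lam) - (update u x (c : ZMod p) k).val =
      (update v x 0 k).val - (update u x 0 k).val := by
    intro k
    by_cases hk : k = x <;> simp [hk]
  have hlin : ∑ k ∈ Icc 1 m, g k * ((update v x (c : ZMod p) k).val : ZMod lam) -
        ∑ k ∈ Icc 1 m, g k * ((update u x (c : ZMod p) k).val : ZMod lam) =
      ∑ k ∈ Icc 1 m, g k * ((update v x 0 k).val : ZMod lam) -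
        ∑ k ∈ Icc 1 m, g k * ((update u x 0 k).val : ZMod lam) := by
    simp only [← sum_sub_distrib, ← mul_sub, hpt]
  have hupdate : ∀ e : ZMod p, h (update v x e) = h (update u x e) := fun e =>
    hh _ _ fun k hk₁ hk₂ => by simp [show k ≠ x by omega, hlow k hk₁ hk₂]
  simp only [pathFun]
  linear_combination ((lam / p : ℕ) : ZMod lam) * hpath + hlin + hupdate c - hupdate 0 +
    ((lam / p : ℕ) : ZMod lam) * (γ.val : ZMod lam) * hpt (π s)

end PathFun

section Dig

variable {p : ℕ}

lemma dig_eq_dig_iff (hp : 0 < p) {n n' x : ℕ} :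
    dig p n x = dig p n' x ↔ digit p n (x - 1) = digit p n' (x - 1) := by
  change ((digit p n (x - 1) : ℕ) : ZMod p) = digit p n' (x - 1) ↔ _
  rw [ZMod.natCast_eq_natCast_iff', Nat.mod_eq_of_lt (digit_lt hp _ _),
    Nat.mod_eq_of_lt (digit_lt hp _ _)]

lemma dig_setDigit (hp : 0 < p) {c : ℕ} (hc : c < p) (n k : ℕ) {x : ℕ} (hx : 1 ≤ x) :
    dig p (setDigit p n k c) x = update (dig p n) (k + 1) (c : ZMod p) x := by
  change ((digit p (setDigit p n k c) (x - 1) : ℕ) : ZMod p) = _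
  rw [digit_setDigit hp hc, update_apply]
  by_cases hxk : x = k + 1
  · simp [hxk]
  · rw [if_neg (by omega), if_neg hxk]
    rfl

lemma dig_setDigit_eq_dig_setDigit_iff (hp : 0 < p) {c : ℕ} (hc : c < p) {n n' k : ℕ}
    (hk : digit p n k = digit p n' k) {x : ℕ} (hx : 1 ≤ x) :
    dig p (setDigit p n k c) x = dig p (setDigit p n' k c) x ↔ dig p n x = dig p n' x := by
  rw [dig_setDigit hp hc _ _ hx, dig_setDigit hp hc _ _ hx, update_apply, update_apply]
  split_ifs with hxk
  · subst hxk
    exact iff_of_true rfl (by rw [dig_eq_dig_iff hp, Nat.add_sub_cancel, hk])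
  · rfl

lemma exists_dig_ne_dig_add (hp : 0 < p) {s m τ n : ℕ} (hτ₀ : 0 < τ) (hτ : p ^ (s - 1) ∣ τ)
    (hn : n + τ < p ^ m) : ∃ x, s ≤ x ∧ x ≤ m ∧ dig p n x ≠ dig p (n + τ) x := by
  obtain ⟨k, hkm, hk⟩ : ∃ k < m, digit p n k ≠ digit p (n + τ) k := by
    by_contra! H
    exact (by omega : n ≠ n + τ) (eq_of_digit_eq (by omega) hn H)
  refine ⟨k + 1, ?_, hkm, by rwa [Ne, dig_eq_dig_iff hp, Nat.add_sub_cancel]⟩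
  by_contra hks
  exact hk (digit_add_of_dvd hp ((pow_dvd_pow p (by omega)).trans hτ) n).symm

lemma dig_add_of_pow_dvd (hp : 0 < p) {s τ : ℕ} (hτ : p ^ (s - 1) ∣ τ) (n : ℕ) {x : ℕ}
    (hx : 1 ≤ x) (hxs : x ≤ s - 1) : dig p (n + τ) x = dig p n x := by
  rw [dig_eq_dig_iff hp, digit_add_of_dvd hp ((pow_dvd_pow p (by omega)).trans hτ)]

end Dig

section Pivot

variable {p s m τ : ℕ} {π : ℕ → ℕ}

noncomputable def pivot (p s m τ : ℕ) (π : ℕ → ℕ) (n : ℕ) : ℕ :=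
  sInf {r | s < r ∧ r ≤ m ∧ dig p n (π r) ≠ dig p (n + τ) (π r)}

lemma pivot_spec (hp : 0 < p) (hπ : ∀ r ∈ Icc s m, π r ∈ Icc s m) (hπinj : Injective π)
    (hτ₀ : 0 < τ) (hτ : p ^ (s - 1) ∣ τ) {n : ℕ} (hn : n + τ < p ^ m)
    (hns : dig p n (π s) = dig p (n + τ) (π s)) :
    s < pivot p s m τ π n ∧ pivot p s m τ π n ≤ m ∧
      dig p n (π (pivot p s m τ π n)) ≠ dig p (n + τ) (π (pivot p s m τ π n)) ∧
      ∀ r, s ≤ r → r < pivot p s m τ π n → dig p n (π r) = dig p (n + τ) (π r) := by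
  obtain ⟨x, hsx, hxm, hx⟩ := exists_dig_ne_dig_add hp hτ₀ hτ hn
  obtain ⟨r, hr, rfl⟩ := surjOn_of_injOn_of_card_le π (fun r hr => hπ r hr)
    hπinj.injOn le_rfl (mem_Icc.mpr ⟨hsx, hxm⟩ : x ∈ Icc s m)
  rw [mem_coe, mem_Icc] at hr
  obtain ⟨h₁, h₂, h₃⟩ : pivot p s m τ π n ∈
      {r | s < r ∧ r ≤ m ∧ dig p n (π r) ≠ dig p (n + τ) (π r)} :=
    Nat.sInf_mem ⟨r, lt_of_le_of_ne hr.1 (by rintro rfl; exact hx hns), hr.2, hx⟩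
  refine ⟨h₁, h₂, h₃, fun r hr₁ hr₂ => ?_⟩
  rcases hr₁.eq_or_lt with rfl | hr₁
  · exact hns
  · by_contra H
    exact Nat.notMem_of_lt_sInf hr₂ ⟨hr₁, by omega, H⟩

lemma pivot_setDigit (hp : 0 < p) (hπ : ∀ r ∈ Icc s m, 1 ≤ π r) {n k c : ℕ} (hc : c < p)
    (hk : digit p (n + τ) k = digit p n k) :
    pivot p s m τ π (setDigit p n k c) = pivot p s m τ π n := by
  unfold pivot
  congr 1
  ext r
  simp only [Set.mem_ofPred_eq, setDigit_add_of_digit_eq hk]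
  refine and_congr_right fun hr => and_congr_right fun hr' => not_congr ?_
  exact dig_setDigit_eq_dig_setDigit_iff hp hc hk.symm (hπ r (mem_Icc.mpr ⟨hr.le, hr'⟩))

noncomputable def pivotDigit (p s m τ : ℕ) (π : ℕ → ℕ) (n : ℕ) : ℕ :=
  π (pivot p s m τ π n - 1) - 1

lemma pivotDigit_spec (hp : 0 < p) (hs : 1 ≤ s) (hπ : ∀ r ∈ Icc s m, π r ∈ Icc s m)
    (hπinj : Injective π) (hτ₀ : 0 < τ) (hτ : p ^ (s - 1) ∣ τ) {n : ℕ} (hn : n + τ < p ^ m)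
    (hns : dig p n (π s) = dig p (n + τ) (π s)) :
    pivotDigit p s m τ π n + 1 = π (pivot p s m τ π n - 1) ∧ pivotDigit p s m τ π n < m ∧
      digit p (n + τ) (pivotDigit p s m τ π n) = digit p n (pivotDigit p s m τ π n) := by
  obtain ⟨hst, htm, -, hagree⟩ := pivot_spec hp hπ hπinj hτ₀ hτ hn hns
  have hmem := mem_Icc.mp (hπ (pivot p s m τ π n - 1) (mem_Icc.mpr ⟨by omega, by omega⟩))
  have hk : pivotDigit p s m τ π n + 1 = π (pivot p s m τ π n - 1) := by
    unfold pivotDigit; omega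
  refine ⟨hk, by omega, ?_⟩
  have := hagree (pivot p s m τ π n - 1) (by omega) (by omega)
  rwa [← hk, dig_eq_dig_iff hp, Nat.add_sub_cancel, eq_comm] at this

lemma pivotDigit_setDigit (hp : 0 < p) (hπ : ∀ r ∈ Icc s m, 1 ≤ π r) {n k c : ℕ} (hc : c < p)
    (hk : digit p (n + τ) k = digit p n k) :
    pivotDigit p s m τ π (setDigit p n k c) = pivotDigit p s m τ π n := by
  rw [pivotDigit, pivotDigit, pivot_setDigit hp hπ hc hk]

end Pivot

section Correlation

variable {p lam : ℕ}

noncomputable def aacfTerm (F : ZMod p → (ℕ → ZMod p) → ZMod lam) (τ n : ℕ) : ℂ :=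
  ∑ γ ∈ range p, eZMod lam (F γ (dig p n) - F γ (dig p (n + τ)))

lemma sum_aacf_eq_sum_aacfTerm [NeZero lam] (F : ZMod p → (ℕ → ZMod p) → ZMod lam) (L τ : ℕ) :
    ∑ γ ∈ range p, aacf L (fun i => eZMod lam (F γ (dig p i))) τ =
      ∑ n ∈ range (L - τ), aacfTerm F τ n := by
  simp only [aacf, aacfTerm, conj_eZMod]
  rw [sum_comm]
  refine sum_congr rfl fun n _ => sum_congr rfl fun γ _ => ?_
  simp only [eZMod_eq_stdAddChar, sub_eq_add_neg, AddChar.map_add_eq_mul]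

variable {π : ℕ → ℕ} {s m : ℕ} (g : ℕ → ZMod lam) (g₀ : ZMod lam) (h : (ℕ → ZMod p) → ZMod lam)

lemma aacfTerm_pathFun_eq_zero (hlam : 0 < lam) (hpl : p ∣ lam) {τ n : ℕ}
    (hn : dig p n (π s) ≠ dig p (n + τ) (π s)) :
    aacfTerm (pathFun lam π s m g g₀ h) τ n = 0 := by
  rw [aacfTerm, sum_congr rfl fun γ hγ => by rw [pathFun_sub_pathFun g g₀ h γ (mem_range.mp hγ)]]
  exact sum_range_eZMod_add_mul_val_sub_val hlam hpl hn _

end Correlation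

section Orbit

variable {p lam s m τ : ℕ} {π : ℕ → ℕ} (g : ℕ → ZMod lam) (g₀ : ZMod lam)
  (h : (ℕ → ZMod p) → ZMod lam)

lemma sum_aacfTerm_pathFun_setDigit_eq_zero (hlam : 0 < lam) (hpl : p ∣ lam) (hs : 1 ≤ s)
    (hπ : ∀ r ∈ Icc s m, π r ∈ Icc s m) (hπinj : Injective π)
    (hh : ∀ u w : ℕ → ZMod p, (∀ k, 1 ≤ k → k ≤ s - 1 → u k = w k) → h u = h w)
    (hτ₀ : 0 < τ) (hτ : p ^ (s - 1) ∣ τ) {n : ℕ} (hn : n + τ < p ^ m)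
    (hns : dig p n (π s) = dig p (n + τ) (π s)) :
    ∑ c ∈ range p, aacfTerm (pathFun lam π s m g g₀ h) τ
      (setDigit p n (pivotDigit p s m τ π n) c) = 0 := by
  have hp : 0 < p := Nat.pos_of_dvd_of_pos hpl hlam
  obtain ⟨hst, htm, hne, hagree⟩ := pivot_spec hp hπ hπinj hτ₀ hτ hn hns
  obtain ⟨hk₁, -, hk⟩ := pivotDigit_spec hp hs hπ hπinj hτ₀ hτ hn hns
  set t := pivot p s m τ π n
  set k := pivotDigit p s m τ π n
  have hsπ : ∀ r ∈ Icc s m, s ≤ π r := fun r hr => (mem_Icc.mp (hπ r hr)).1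
  have hlow : ∀ x, 1 ≤ x → x ≤ s - 1 → dig p n x = dig p (n + τ) x := fun x hx₁ hx₂ =>
    (dig_add_of_pow_dvd hp hτ n hx₁ hx₂).symm
  have hterm : ∀ c < p, ∀ γ : ZMod p,
      pathFun lam π s m g g₀ h γ (dig p (setDigit p n k c)) -
          pathFun lam π s m g g₀ h γ (dig p (setDigit p n k c + τ)) =
        (pathFun lam π s m g g₀ h γ (update (dig p n) (π (t - 1)) 0) -
          pathFun lam π s m g g₀ h γ (update (dig p (n + τ)) (π (t - 1)) 0)) +
        c * (((lam / p : ℕ) : ZMod lam) * ((dig p n (π t)).val - (dig p (n + τ) (π t)).val)) := by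
    intro c hc γ
    rw [setDigit_add_of_digit_eq hk, ← hk₁,
      pathFun_congr g g₀ h hs (hst.le.trans htm) hπ hh (fun x hx => dig_setDigit hp hc n k hx),
      pathFun_congr g g₀ h hs (hst.le.trans htm) hπ hh (fun x hx => dig_setDigit hp hc _ k hx),
      hk₁]
    exact pathFun_update_sub_pathFun_update g g₀ h hπinj hsπ hh hst htm hlow hagree γ c hc
  simp only [aacfTerm]
  rw [sum_comm]
  refine sum_eq_zero fun γ _ => ?_
  rw [sum_congr rfl fun c hc => by rw [hterm c (mem_range.mp hc) γ]]
  exact sum_range_eZMod_add_mul_val_sub_val hlam hpl hne _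

lemma sum_filter_aacfTerm_pathFun_eq_zero (hlam : 0 < lam) (hpl : p ∣ lam) (hs : 1 ≤ s)
    (hsm : s ≤ m) (hπ : ∀ r ∈ Icc s m, π r ∈ Icc s m) (hπinj : Injective π)
    (hh : ∀ u w : ℕ → ZMod p, (∀ k, 1 ≤ k → k ≤ s - 1 → u k = w k) → h u = h w)
    (hτ₀ : 0 < τ) (hτ : p ^ (s - 1) ∣ τ) :
    ∑ n ∈ (range (p ^ m - τ)).filter (fun n => dig p n (π s) = dig p (n + τ) (π s)),
      aacfTerm (pathFun lam π s m g g₀ h) τ n = 0 := by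
  have hp : 0 < p := Nat.pos_of_dvd_of_pos hpl hlam
  have hpos : ∀ r ∈ Icc s m, 1 ≤ π r := fun r hr => hs.trans (mem_Icc.mp (hπ r hr)).1
  set κ := pivotDigit p s m τ π
  have hspec : ∀ n ∈ (range (p ^ m - τ)).filter (fun n => dig p n (π s) = dig p (n + τ) (π s)),
      n + τ < p ^ m ∧ dig p n (π s) = dig p (n + τ) (π s) ∧ κ n < m ∧
        digit p (n + τ) (κ n) = digit p n (κ n) := by
    intro n hn
    rw [mem_filter, mem_range] at hn
    obtain ⟨-, hκm, hκ⟩ := pivotDigit_spec hp hs hπ hπinj hτ₀ hτ (by omega) hn.2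
    exact ⟨by omega, hn.2, hκm, hκ⟩
  have hκ : ∀ n ∈ (range (p ^ m - τ)).filter (fun n => dig p n (π s) = dig p (n + τ) (π s)),
      ∀ c < p, κ (setDigit p n (κ n) c) = κ n := fun n hn c hc =>
    pivotDigit_setDigit hp hpos hc (hspec n hn).2.2.2
  refine sum_eq_zero_of_sum_orbit_eq_zero hp.ne' (fun n c => setDigit p n (κ n) c)
    (fun n => digit p n (κ n)) _ ?_ (fun n _ => digit_lt hp _ _)
    (fun n _ => setDigit_digit n _) ?_ ?_ ?_
  · intro n hn c hc
    obtain ⟨hnτ, hns, hκm, hκn⟩ := hspec n hn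
    rw [mem_filter, mem_range, setDigit_add_of_digit_eq hκn,
      dig_setDigit_eq_dig_setDigit_iff hp hc hκn.symm (hpos s (mem_Icc.mpr ⟨le_rfl, hsm⟩))]
    refine ⟨Nat.lt_sub_of_add_lt ?_, hns⟩
    rw [setDigit_add_of_digit_eq hκn]
    exact setDigit_lt hp hnτ hκm hc
  · intro n hn c hc
    rw [hκ n hn c hc, digit_setDigit hp hc, if_pos rfl]
  · intro n hn c hc c' _
    rw [hκ n hn c hc, setDigit_setDigit hp hc]
  · intro n hn
    obtain ⟨hnτ, hns, -, -⟩ := hspec n hn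
    exact sum_aacfTerm_pathFun_setDigit_eq_zero g g₀ h hlam hpl hs hπ hπinj hh hτ₀ hτ hnτ hns

end Orbit

theorem stmt0_general (p m s lam : ℕ) (hs : 1 ≤ s) (hsm : s ≤ m)
    (hlam : 0 < lam) (hpl : p ∣ lam)
    (π : Equiv.Perm ℕ) (hπ : ∀ i ∈ Finset.Icc s m, π i ∈ Finset.Icc s m)
    (g : ℕ → ZMod lam) (g₀ : ZMod lam)
    (h : (ℕ → ZMod p) → ZMod lam)
    (hdep : ∀ u w : ℕ → ZMod p, (∀ t, 1 ≤ t → t ≤ s - 1 → u t = w t) → h u = h w)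
    (f : (ℕ → ZMod p) → ZMod lam)
    (hf : ∀ v : ℕ → ZMod p,
      f v = ((lam / p : ℕ) : ZMod lam) *
            (∑ i ∈ Finset.Ico s m, ((v (π i)).val : ZMod lam) * ((v (π (i + 1))).val : ZMod lam))
        + ∑ i ∈ Finset.Icc 1 m, g i * ((v i).val : ZMod lam) + g₀ + h v)
    (a : ZMod p → (ℕ → ZMod p) → ZMod lam)
    (ha : ∀ (γ : ZMod p) (v : ℕ → ZMod p),
      a γ v = f v + ((lam / p : ℕ) : ZMod lam) * ((v (π s)).val : ZMod lam) * (γ.val : ZMod lam))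
    (τ : ℕ) (hτ0 : 0 < τ) (hτS : p ^ (s - 1) ∣ τ) :
    ∑ γ ∈ Finset.range p,
      aacf (p ^ m) (fun i => eZMod lam (a (γ : ZMod p) (dig p i))) τ = 0 := by
  have : NeZero lam := ⟨hlam.ne'⟩
  obtain rfl : a = pathFun lam π s m g g₀ h := funext₂ fun γ v => by rw [ha, hf, pathFun, pathSum]
  rw [sum_aacf_eq_sum_aacfTerm, ← sum_filter_add_sum_filter_not _
      (fun n => dig p n (π s) = dig p (n + τ) (π s)),
    sum_filter_aacfTerm_pathFun_eq_zero g g₀ h hlam hpl hs hsm hπ π.injective hdep hτ0 hτS,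
    zero_add]
  exact sum_eq_zero fun n hn => aacfTerm_pathFun_eq_zero g g₀ h hlam hpl (mem_filter.mp hn).2

theorem stmt0 (p m s lam : ℕ) (hp : p.Prime) (hm : 1 ≤ m) (hs : 1 ≤ s) (hsm : s ≤ m)
    (hlam : 0 < lam) (hpl : p ∣ lam)
    (π : Equiv.Perm ℕ) (hπ : ∀ i ∈ Finset.Icc s m, π i ∈ Finset.Icc s m)
    (g : ℕ → ZMod lam) (g₀ : ZMod lam)
    (h : (ℕ → ZMod p) → ZMod lam)
    (hdep : ∀ u w : ℕ → ZMod p, (∀ t, 1 ≤ t → t ≤ s - 1 → u t = w t) → h u = h w)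
    (hs1 : s = 1 → ∀ u, h u = 0)
    (f : (ℕ → ZMod p) → ZMod lam)
    (hf : ∀ v : ℕ → ZMod p,
      f v = ((lam / p : ℕ) : ZMod lam) *
            (∑ i ∈ Finset.Ico s m, ((v (π i)).val : ZMod lam) * ((v (π (i + 1))).val : ZMod lam))
        + ∑ i ∈ Finset.Icc 1 m, g i * ((v i).val : ZMod lam) + g₀ + h v)
    (a : ZMod p → (ℕ → ZMod p) → ZMod lam)
    (ha : ∀ (γ : ZMod p) (v : ℕ → ZMod p),
      a γ v = f v + ((lam / p : ℕ) : ZMod lam) * ((v (π s)).val : ZMod lam) * (γ.val : ZMod lam))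
    (τ : ℕ) (hτ0 : 0 < τ) (hτL : τ < p ^ m) (hτS : p ^ (s - 1) ∣ τ) :
    ∑ γ ∈ Finset.range p,
      aacf (p ^ m) (fun i => eZMod lam (a (γ : ZMod p) (dig p i))) τ = 0 :=
  stmt0_general p m s lam hs hsm hlam hpl π hπ g g₀ h hdep f hf a ha τ hτ0 hτS
end

section
/- Let a = (a_0, …, a_{L_1−1}) and b = (b_0, …, b_{L_2−1}) be complex-valued sequences of lengths L_1 and L_2, and let a ⊗ b be their Kronecker product, the sequence of length L_1·L_2 with entries (a ⊗ b)_{i·L_2 + j} = a_i · b_j for 0 ≤ i < L_1 and 0 ≤ j < L_2. Then for every integer τ with 0 ≤ τ < L_1·L_2, ρ(a ⊗ b)(τ) = ρ(a)(⌊τ/L_2⌋) · ρ(b)(τ mod L_2) + Δ · ρ(a)(⌊τ/L_2⌋ + 1) · conj(ρ(b)(L_2 − (τ mod L_2))), where Δ = 0 if L_2 ∣ τ and Δ = 1 otherwise. -/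
open Finset

/-!
Write `τ = q L₂ + r` with `r < L₂` and index the Kronecker product by `t = i L₂ + j`. The partner
`t + τ` of `t` lies in block `i + q` at position `j + r` when `j < L₂ - r`, and otherwise in block
`i + q + 1` at position `j - (L₂ - r)`. The first kind of pairs contributes `ρ(a)(q) ρ(b)(r)`, the
second `ρ(a)(q + 1) conj ρ(b)(L₂ - r)`; for `r = 0` the second family is empty, which is the factor `Δ`.
-/

section BlockSums

variable {M : Type*} [AddCommMonoid M]

theorem Finset.sum_range_mul_eq_sum_sum (f : ℕ → M) (m n : ℕ) :
    ∑ t ∈ range (m * n), f t = ∑ i ∈ range m, ∑ j ∈ range n, f (i * n + j) := by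
  induction m with
  | zero => simp
  | succ m ih => rw [sum_range_succ, ← ih, Nat.succ_mul, sum_range_add]

theorem Finset.sum_range_mul_add_eq_sum_sum (f : ℕ → M) (m s u : ℕ) :
    ∑ t ∈ range (m * (s + u) + s), f t =
      ∑ i ∈ range (m + 1), ∑ j ∈ range s, f (i * (s + u) + j) +
        ∑ i ∈ range m, ∑ j ∈ range u, f (i * (s + u) + (s + j)) := by
  simp only [sum_range_add, sum_range_mul_eq_sum_sum, sum_range_succ _ m, sum_add_distrib]
  abel

end BlockSums

def kron {R : Type*} [Mul R] (L : ℕ) (a b : ℕ → R) : ℕ → R :=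
  fun t => a (t / L) * b (t % L)

theorem kron_mul_add {R : Type*} [Mul R] {L j : ℕ} (a b : ℕ → R) (i : ℕ) (hj : j < L) :
    kron L a b (i * L + j) = a i * b j := by
  have hL : 0 < L := j.zero_le.trans_lt hj
  rw [kron, Nat.mul_add_mod_of_lt hj, Nat.add_comm, Nat.add_mul_div_right _ _ hL,
    Nat.div_eq_of_lt hj, Nat.zero_add]

theorem aacf_eq_zero_of_le {L τ : ℕ} (a : ℕ → ℂ) (h : L ≤ τ) : aacf L a τ = 0 := by
  simp [aacf, Nat.sub_eq_zero_of_le h]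

theorem aacf_kron (L₁ L₂ : ℕ) (a b : ℕ → ℂ) (q : ℕ) {r : ℕ} (hr : r < L₂) :
    aacf (L₁ * L₂) (kron L₂ a b) (q * L₂ + r) =
      aacf L₁ a q * aacf L₂ b r + aacf L₁ a (q + 1) * starRingEnd ℂ (aacf L₂ b (L₂ - r)) := by
  obtain hq | hq := le_or_gt L₁ q
  · have hqτ : L₁ * L₂ ≤ q * L₂ + r := (Nat.mul_le_mul_right _ hq).trans (Nat.le_add_right _ _)
    rw [aacf_eq_zero_of_le _ hqτ, aacf_eq_zero_of_le _ hq, aacf_eq_zero_of_le _ (Nat.le_succ_of_le hq)]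
    simp
  obtain ⟨n, rfl⟩ : ∃ n, L₁ = q + n + 1 := ⟨L₁ - q - 1, by omega⟩
  obtain ⟨s, rfl⟩ : ∃ s, L₂ = s + r := ⟨L₂ - r, by omega⟩
  have hlen : (q + n + 1) * (s + r) - (q * (s + r) + r) = n * (s + r) + s :=
    Nat.sub_eq_of_eq_add (by ring)
  unfold aacf
  rw [hlen, sum_range_mul_add_eq_sum_sum, map_sum, sum_mul_sum, sum_mul_sum,
    show q + n + 1 - q = n + 1 by omega, show q + n + 1 - (q + 1) = n by omega,
    Nat.add_sub_cancel, Nat.add_sub_cancel_left]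
  congr 1
  · refine sum_congr rfl fun i _ => sum_congr rfl fun j hj => ?_
    have hjr : j + r < s + r := Nat.add_lt_add_right (mem_range.mp hj) r
    rw [show i * (s + r) + j + (q * (s + r) + r) = (i + q) * (s + r) + (j + r) by ring,
      kron_mul_add _ _ _ (by omega), kron_mul_add _ _ _ hjr, map_mul]
    ring
  · refine sum_congr rfl fun i _ => sum_congr rfl fun j hj => ?_
    have hjr : j < r := mem_range.mp hj
    rw [show i * (s + r) + (s + j) + (q * (s + r) + r) = (i + q + 1) * (s + r) + j by ring,
      kron_mul_add _ _ _ (by omega), kron_mul_add _ _ _ (by omega), map_mul, map_mul,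
      Complex.conj_conj, add_comm j s, ← add_assoc]
    ring

theorem stmt5_general (L₁ L₂ : ℕ) (hL₂ : 0 < L₂) (a b : ℕ → ℂ)
    (τ : ℕ) :
    aacf (L₁ * L₂) (fun t => a (t / L₂) * b (t % L₂)) τ =
      aacf L₁ a (τ / L₂) * aacf L₂ b (τ % L₂) +
      (if L₂ ∣ τ then 0 else 1) * aacf L₁ a (τ / L₂ + 1) *
        (starRingEnd ℂ) (aacf L₂ b (L₂ - τ % L₂)) := by
  have key := aacf_kron L₁ L₂ a b (τ / L₂) (Nat.mod_lt τ hL₂)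
  rw [Nat.div_add_mod' τ L₂] at key
  rw [show (fun t => a (t / L₂) * b (t % L₂)) = kron L₂ a b from rfl, key]
  split_ifs with hdvd
  · rw [Nat.mod_eq_zero_of_dvd hdvd, Nat.sub_zero, aacf_eq_zero_of_le _ le_rfl]
    simp
  · rw [one_mul]

theorem stmt5 (L₁ L₂ : ℕ) (hL₁ : 0 < L₁) (hL₂ : 0 < L₂) (a b : ℕ → ℂ)
    (τ : ℕ) (hτ : τ < L₁ * L₂) :
    aacf (L₁ * L₂) (fun t => a (t / L₂) * b (t % L₂)) τ =
      aacf L₁ a (τ / L₂) * aacf L₂ b (τ % L₂) +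
      (if L₂ ∣ τ then 0 else 1) * aacf L₁ a (τ / L₂ + 1) *
        (starRingEnd ℂ) (aacf L₂ b (L₂ - τ % L₂)) :=
  stmt5_general L₁ L₂ hL₂ a b τ
end

section
/- Let {a_0, …, a_{M−1}} be complex-valued sequences of length L with unimodular entries (|a_{i,k}| = 1 for all i, k) forming an (M, L, S)-multiple shift complementary set, i.e. Σ_{i=0}^{M−1} ρ(a_i)(τ) = 0 for every τ with 0 < τ < L and S ∣ τ. Then for every i ∈ {0, …, M−1} and every complex number z with |z| = 1, |Σ_{k=0}^{L−1} a_{i,k} · z^k|² ≤ M·L·S; consequently, the peak-to-mean envelope power ratio of each sequence a_i, namely sup_{|z|=1} |Σ_{k=0}^{L−1} a_{i,k} z^k|² / L, is upper bounded by M·S. -/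
open Finset

/-!
For `‖w‖ = 1` the power `‖∑ k, a k * w ^ k‖ ^ 2` expands as
`ρ(a)(0) + ∑_{0<τ<L} (ρ(a)(τ) * conj w ^ τ + conj ρ(a)(τ) * w ^ τ)`. Average this over the rotated
points `ω ^ j * z`, `ω` a primitive `S`-th root of unity, and sum over the set: the average
of `(ω ^ j * z) ^ τ` vanishes unless `S ∣ τ`, and for `S ∣ τ` the autocorrelations cancel
across the set. What remains is `S * ∑ i, ρ(a i)(0) = M * L * S`, a sum of nonnegative terms among which the
envelope power at `z` of each single sequence appears.
-/

section Shifts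

variable {β : Type*} [AddCommMonoid β]

theorem sum_Ico_sum_range_shift_succ (c : ℕ → ℕ → β) (L : ℕ) :
    ∑ τ ∈ Ico 1 (L + 1), ∑ i ∈ range (L + 1 - τ), c i (i + τ)
      = ∑ τ ∈ Ico 1 L, ∑ i ∈ range (L - τ), c i (i + τ) + ∑ k ∈ range L, c k L := by
  have peel_last : ∀ τ ∈ Ico 1 (L + 1), ∑ i ∈ range (L + 1 - τ), c i (i + τ)
      = ∑ i ∈ range (L - τ), c i (i + τ) + c (L - τ) L := by
    intro τ hτ
    rw [mem_Ico] at hτ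
    rw [show L + 1 - τ = L - τ + 1 by omega, sum_range_succ, Nat.sub_add_cancel (by omega)]
  rw [sum_congr rfl peel_last, sum_add_distrib]
  congr 1
  · rcases Nat.eq_zero_or_pos L with rfl | hL
    · simp
    · simp [sum_Ico_succ_top hL]
  · exact sum_nbij' (L - ·) (L - ·) (by simp; omega) (by simp; omega) (by simp; omega)
      (by simp; omega) (fun _ _ => rfl)

theorem sum_range_sum_range_eq_sum_diag_add_sum_shifts (c : ℕ → ℕ → β) (L : ℕ) :
    ∑ k ∈ range L, ∑ l ∈ range L, c k l
      = ∑ k ∈ range L, c k k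
        + ∑ τ ∈ Ico 1 L, ∑ i ∈ range (L - τ), (c i (i + τ) + c (i + τ) i) := by
  induction L with
  | zero => simp
  | succ L ih =>
    have lower := sum_Ico_sum_range_shift_succ (fun k l => c l k) L
    simp only [sum_range_succ, sum_add_distrib, sum_Ico_sum_range_shift_succ] at ih lower ⊢
    rw [ih, lower]
    abel

end Shifts

theorem IsPrimitiveRoot.sum_pow_mul_pow_eq_ite {K : Type*} [Field K] {ω : K} {S : ℕ}
    (hω : IsPrimitiveRoot ω S) (z : K) (τ : ℕ) :
    ∑ j ∈ range S, (ω ^ j * z) ^ τ = if S ∣ τ then S * z ^ τ else 0 := by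
  simp_rw [mul_pow, ← sum_mul, ← pow_mul, mul_comm _ τ, pow_mul]
  split_ifs with hτ
  · simp [(hω.pow_eq_one_iff_dvd τ).mpr hτ]
  · rw [geom_sum_eq (mt (hω.pow_eq_one_iff_dvd τ).mp hτ), ← pow_mul, mul_comm τ S, pow_mul,
      hω.pow_eq_one, one_pow, sub_self, zero_div, zero_mul]

open ComplexConjugate

theorem sq_norm_sum_mul_pow_eq_aacf (L : ℕ) (b : ℕ → ℂ) {w : ℂ} (hw : ‖w‖ = 1) :
    ((‖∑ k ∈ range L, b k * w ^ k‖ ^ 2 : ℝ) : ℂ)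
      = aacf L b 0 + ∑ τ ∈ Ico 1 L, (aacf L b τ * conj (w ^ τ) + conj (aacf L b τ) * w ^ τ) := by
  have unit_pow (n : ℕ) : w ^ n * conj (w ^ n) = 1 := by
    rw [Complex.mul_conj', norm_pow, hw, one_pow, Complex.ofReal_one, one_pow]
  rw [Complex.ofReal_pow, ← Complex.mul_conj', map_sum, sum_mul_sum,
    sum_range_sum_range_eq_sum_diag_add_sum_shifts]
  simp only [aacf, Nat.sub_zero, add_zero, map_sum, map_mul, Complex.conj_conj, sum_mul,
    ← sum_add_distrib]
  congr 1
  · refine sum_congr rfl fun k _ => ?_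
    linear_combination b k * conj (b k) * unit_pow k
  · refine sum_congr rfl fun τ _ => sum_congr rfl fun i _ => ?_
    simp only [pow_add, map_mul]
    linear_combination
      (b i * conj (b (i + τ)) * conj (w ^ τ) + conj (b i) * b (i + τ) * w ^ τ) * unit_pow i

theorem aacf_zero_eq_of_norm_eq_one {L : ℕ} {b : ℕ → ℂ} (hb : ∀ k < L, ‖b k‖ = 1) :
    aacf L b 0 = L := by
  simp only [aacf, Nat.sub_zero, add_zero, Complex.mul_conj']
  rw [sum_congr rfl fun k hk => by rw [hb k (mem_range.mp hk)]]
  simp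

theorem sum_sum_sq_norm_rotate_eq_of_mscs {M L S : ℕ} {ω : ℂ} (hω : IsPrimitiveRoot ω S)
    (hS : S ≠ 0) (a : ℕ → ℕ → ℂ)
    (hmscs : ∀ τ, 0 < τ → τ < L → S ∣ τ → ∑ i ∈ range M, aacf L (a i) τ = 0)
    {z : ℂ} (hz : ‖z‖ = 1) :
    ((∑ i ∈ range M, ∑ j ∈ range S, ‖∑ k ∈ range L, a i k * (ω ^ j * z) ^ k‖ ^ 2 : ℝ) : ℂ)
      = S * ∑ i ∈ range M, aacf L (a i) 0 := by
  have hw (j : ℕ) : ‖ω ^ j * z‖ = 1 := by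
    rw [norm_mul, norm_pow, hω.norm'_eq_one hS, one_pow, one_mul, hz]
  have shifts_vanish : ∀ τ ∈ Ico 1 L,
      ∑ i ∈ range M, ∑ j ∈ range S,
        (aacf L (a i) τ * conj ((ω ^ j * z) ^ τ) + conj (aacf L (a i) τ) * (ω ^ j * z) ^ τ)
        = 0 := by
    intro τ hτ
    rw [mem_Ico] at hτ
    simp only [sum_add_distrib, ← mul_sum, ← sum_mul, ← map_sum, hω.sum_pow_mul_pow_eq_ite]
    split_ifs with hSτ
    · simp [hmscs τ hτ.1 hτ.2 hSτ]
    · simp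
  calc _ = ∑ i ∈ range M, ∑ j ∈ range S, (aacf L (a i) 0 + ∑ τ ∈ Ico 1 L,
          (aacf L (a i) τ * conj ((ω ^ j * z) ^ τ) + conj (aacf L (a i) τ) * (ω ^ j * z) ^ τ)) := by
        simp only [Complex.ofReal_sum, sq_norm_sum_mul_pow_eq_aacf L _ (hw _)]
    _ = ∑ i ∈ range M, S * aacf L (a i) 0 + ∑ τ ∈ Ico 1 L, ∑ i ∈ range M, ∑ j ∈ range S,
          (aacf L (a i) τ * conj ((ω ^ j * z) ^ τ) + conj (aacf L (a i) τ) * (ω ^ j * z) ^ τ) := by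
        rw [sum_congr rfl fun i _ => sum_add_distrib, sum_add_distrib]
        congr 1
        · simp
        · rw [sum_congr rfl fun i _ => sum_comm, sum_comm]
    _ = S * ∑ i ∈ range M, aacf L (a i) 0 := by
        rw [sum_congr rfl shifts_vanish, sum_const_zero, add_zero, mul_sum]

theorem stmt6_general (M L S : ℕ) (hS : 0 < S)
    (a : ℕ → ℕ → ℂ)
    (hunit : ∀ i < M, ∀ k < L, ‖a i k‖ = 1)
    (hmscs : ∀ τ, 0 < τ → τ < L → S ∣ τ →
      ∑ i ∈ Finset.range M, aacf L (a i) τ = 0) :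
    (∀ i < M, ∀ z : ℂ, ‖z‖ = 1 →
      ‖∑ k ∈ Finset.range L, a i k * z ^ k‖ ^ 2 ≤ (M : ℝ) * L * S) ∧
    (∀ i < M,
      sSup {x : ℝ | ∃ z : ℂ, ‖z‖ = 1 ∧
          x = ‖∑ k ∈ Finset.range L, a i k * z ^ k‖ ^ 2 / L}
        ≤ (M : ℝ) * S) := by
  obtain ⟨ω, hω⟩ : ∃ ω : ℂ, IsPrimitiveRoot ω S := ⟨_, Complex.isPrimitiveRoot_exp S hS.ne'⟩
  have energy (z : ℂ) (hz : ‖z‖ = 1) :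
      ∑ i ∈ range M, ∑ j ∈ range S, ‖∑ k ∈ range L, a i k * (ω ^ j * z) ^ k‖ ^ 2
        = M * L * S := by
    have h := sum_sum_sq_norm_rotate_eq_of_mscs hω hS.ne' a hmscs hz
    rw [sum_congr rfl fun i hi => aacf_zero_eq_of_norm_eq_one (hunit i (mem_range.mp hi)),
      sum_const, card_range, nsmul_eq_mul] at h
    exact_mod_cast h.trans (by ring : (S : ℂ) * (M * L) = M * L * S)
  have bound (i : ℕ) (hi : i < M) (z : ℂ) (hz : ‖z‖ = 1) :
      ‖∑ k ∈ range L, a i k * z ^ k‖ ^ 2 ≤ M * L * S := by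
    calc ‖∑ k ∈ range L, a i k * z ^ k‖ ^ 2
        = ‖∑ k ∈ range L, a i k * (ω ^ 0 * z) ^ k‖ ^ 2 := by rw [pow_zero, one_mul]
      _ ≤ ∑ j ∈ range S, ‖∑ k ∈ range L, a i k * (ω ^ j * z) ^ k‖ ^ 2 := by
        exact single_le_sum (f := fun j => ‖∑ k ∈ range L, a i k * (ω ^ j * z) ^ k‖ ^ 2)
          (fun _ _ => by positivity) (mem_range.mpr hS)
      _ ≤ ∑ i ∈ range M, ∑ j ∈ range S, ‖∑ k ∈ range L, a i k * (ω ^ j * z) ^ k‖ ^ 2 := by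
        exact single_le_sum
          (f := fun i => ∑ j ∈ range S, ‖∑ k ∈ range L, a i k * (ω ^ j * z) ^ k‖ ^ 2)
          (fun _ _ => by positivity) (mem_range.mpr hi)
      _ = M * L * S := energy z hz
  refine ⟨bound, fun i hi => Real.sSup_le ?_ (by positivity)⟩
  rintro x ⟨z, hz, rfl⟩
  exact div_le_of_le_mul₀ (Nat.cast_nonneg _) (by positivity) (by linarith [bound i hi z hz])

theorem stmt6 (M L S : ℕ) (hM : 0 < M) (hL : 0 < L) (hS : 0 < S)
    (a : ℕ → ℕ → ℂ)
    (hunit : ∀ i < M, ∀ k < L, ‖a i k‖ = 1)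
    (hmscs : ∀ τ, 0 < τ → τ < L → S ∣ τ →
      ∑ i ∈ Finset.range M, aacf L (a i) τ = 0) :
    (∀ i < M, ∀ z : ℂ, ‖z‖ = 1 →
      ‖∑ k ∈ Finset.range L, a i k * z ^ k‖ ^ 2 ≤ (M : ℝ) * L * S) ∧
    (∀ i < M,
      sSup {x : ℝ | ∃ z : ℂ, ‖z‖ = 1 ∧
          x = ‖∑ k ∈ Finset.range L, a i k * z ^ k‖ ^ 2 / L}
        ≤ (M : ℝ) * S) :=
  stmt6_general M L S hS a hunit hmscs
end

section
/- Let a = (a_0, …, a_{L−1}) be a complex-valued sequence of length L with unimodular entries (|a_k| = 1 for all k), let S ≥ 1 be an integer, and let ζ = exp(2π√−1/S). Then for every complex number z with |z| = 1, Σ_{u=0}^{S−1} |Σ_{k=0}^{L−1} a_k · ζ^{k·u} · z^k|² = L·S + 2·S·Re(Σ_{τ : 0 < τ < L, S ∣ τ} ρ(a)(τ) · z^{−τ}). -/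
open Finset

/-!
Expand `‖∑ₖ bₖ ζ^{ku}‖²` as a double sum over `(k, l)` and sum over `u` first: orthogonality of
the `S`-th roots of unity keeps exactly the pairs with `S ∣ k - l`, each with weight `S`. The
diagonal `k = l` contributes `∑ ‖bₖ‖²`, which is `L` for unimodular `b`, and the pairs at
distance `τ > 0` contribute `ρ(b)(τ)` and its conjugate. Applied to `bₖ = aₖ zᵏ`, whose
autocorrelation is `ρ(b)(τ) = ρ(a)(τ) z^{-τ}` because `conj z = z⁻¹`, this is the theorem.
-/

open ComplexConjugate

section DoubleSums

variable {M : Type*} [AddCommMonoid M]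

theorem sum_range_sum_range_eq_sum_diag_add_lt (L : ℕ) (h : ℕ → ℕ → M) :
    ∑ k ∈ range L, ∑ l ∈ range L, h k l
      = ∑ k ∈ range L, (h k k + ∑ l ∈ range k, (h k l + h l k)) := by
  induction L with
  | zero => simp
  | succ L ih =>
    simp only [sum_range_succ, sum_add_distrib] at ih ⊢
    rw [ih]
    abel

theorem sum_range_sum_range_lt_eq_sum_Ioo (L : ℕ) (f : ℕ → ℕ → M) :
    ∑ k ∈ range L, ∑ l ∈ range k, f k l = ∑ τ ∈ Ioo 0 L, ∑ i ∈ range (L - τ), f (i + τ) i := by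
  rw [sum_sigma', sum_sigma']
  refine sum_nbij' (fun x ↦ ⟨x.1 - x.2, x.2⟩) (fun x ↦ ⟨x.2 + x.1, x.2⟩) ?_ ?_ ?_ ?_ ?_ <;>
    simp only [mem_sigma, mem_range, mem_Ioo, Sigma.forall, Sigma.mk.injEq, heq_eq_eq, and_true] <;>
    intro k l hkl
  all_goals first | omega | rw [Nat.add_sub_of_le hkl.2.le]

theorem sum_range_sum_range_eq_sum_diag_add_sum_Ioo (L : ℕ) (h : ℕ → ℕ → M) :
    ∑ k ∈ range L, ∑ l ∈ range L, h k l
      = ∑ k ∈ range L, h k k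
        + ∑ τ ∈ Ioo 0 L, ∑ i ∈ range (L - τ), (h (i + τ) i + h i (i + τ)) := by
  rw [sum_range_sum_range_eq_sum_diag_add_lt, sum_add_distrib,
    sum_range_sum_range_lt_eq_sum_Ioo L fun k l => h k l + h l k]

end DoubleSums

theorem IsPrimitiveRoot.sum_range_zpow_pow {K : Type*} [Field K] {ζ : K} {S : ℕ}
    (hζ : IsPrimitiveRoot ζ S) (m : ℤ) :
    ∑ u ∈ range S, (ζ ^ m) ^ u = if (S : ℤ) ∣ m then (S : K) else 0 := by
  split_ifs with h
  · simp [(hζ.zpow_eq_one_iff_dvd m).2 h]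
  · rw [geom_sum_eq ((hζ.zpow_eq_one_iff_dvd m).not.2 h), ← zpow_natCast, ← zpow_mul, mul_comm,
      zpow_mul, zpow_natCast, hζ.pow_eq_one, one_zpow, sub_self, zero_div]

theorem IsPrimitiveRoot.sum_range_pow_mul_conj_pow {ζ : ℂ} {S : ℕ} (hζ : IsPrimitiveRoot ζ S)
    (hS : S ≠ 0) (k l : ℕ) :
    ∑ u ∈ range S, ζ ^ (k * u) * conj (ζ ^ (l * u))
      = if (S : ℤ) ∣ (k : ℤ) - l then (S : ℂ) else 0 := by
  rw [← hζ.sum_range_zpow_pow]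
  refine sum_congr rfl fun u _ => ?_
  rw [map_pow, ← Complex.inv_eq_conj (hζ.norm'_eq_one hS), ← zpow_natCast, ← zpow_natCast,
    ← zpow_natCast (ζ ^ _), ← zpow_mul, inv_zpow', ← zpow_add₀ (hζ.ne_zero hS)]
  congr 1
  push_cast
  ring

theorem sum_range_sum_range_ite_dvd_sub (L S : ℕ) (b : ℕ → ℂ) :
    ∑ k ∈ range L, ∑ l ∈ range L, (if (S : ℤ) ∣ (k : ℤ) - l then b k * conj (b l) else 0)
      = ∑ k ∈ range L, b k * conj (b k)
        + (conj (∑ τ ∈ (Ioo 0 L).filter (S ∣ ·), aacf L b τ)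
          + ∑ τ ∈ (Ioo 0 L).filter (S ∣ ·), aacf L b τ) := by
  have shift (i τ : ℕ) : (S : ℤ) ∣ ((i + τ : ℕ) : ℤ) - i ↔ S ∣ τ := by
    push_cast; rw [add_sub_cancel_left, Int.natCast_dvd_natCast]
  have shift' (i τ : ℕ) : (S : ℤ) ∣ (i : ℤ) - (i + τ : ℕ) ↔ S ∣ τ := by
    push_cast; rw [sub_add_cancel_left, dvd_neg, Int.natCast_dvd_natCast]
  simp only [sum_range_sum_range_eq_sum_diag_add_sum_Ioo, sub_self, dvd_zero, if_true, shift,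
    shift', map_sum, sum_filter, ← sum_add_distrib]
  congr 1
  refine sum_congr rfl fun τ _ => ?_
  split_ifs
  · simp only [aacf, map_sum, map_mul, Complex.conj_conj, ← sum_add_distrib, mul_comm]
  · simp

theorem IsPrimitiveRoot.sum_range_norm_sq_eq_aacf {ζ : ℂ} {S : ℕ} (hζ : IsPrimitiveRoot ζ S)
    (hS : S ≠ 0) (L : ℕ) (b : ℕ → ℂ) :
    ∑ u ∈ range S, ‖∑ k ∈ range L, b k * ζ ^ (k * u)‖ ^ 2
      = S * ∑ k ∈ range L, ‖b k‖ ^ 2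
        + 2 * S * (∑ τ ∈ (Ioo 0 L).filter (S ∣ ·), aacf L b τ).re := by
  have expand : ∑ u ∈ range S,
      (∑ k ∈ range L, b k * ζ ^ (k * u)) * conj (∑ k ∈ range L, b k * ζ ^ (k * u))
        = S * ∑ k ∈ range L, ∑ l ∈ range L,
          (if (S : ℤ) ∣ (k : ℤ) - l then b k * conj (b l) else 0) := by
    simp_rw [map_sum, sum_mul_sum, mul_sum]
    rw [sum_comm]
    refine sum_congr rfl fun k _ => ?_
    rw [sum_comm]
    refine sum_congr rfl fun l _ => ?_
    calc ∑ u ∈ range S, b k * ζ ^ (k * u) * conj (b l * ζ ^ (l * u))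
        = b k * conj (b l) * ∑ u ∈ range S, ζ ^ (k * u) * conj (ζ ^ (l * u)) := by
          rw [mul_sum]
          exact sum_congr rfl fun u _ => by rw [map_mul]; ring
      _ = _ := by rw [hζ.sum_range_pow_mul_conj_pow hS]; split_ifs <;> ring
  apply Complex.ofReal_injective
  push_cast
  simp_rw [← Complex.mul_conj', Complex.re_eq_add_conj]
  rw [expand, sum_range_sum_range_ite_dvd_sub]
  ring

theorem aacf_mul_pow {z : ℂ} (hz : ‖z‖ = 1) (L : ℕ) (a : ℕ → ℂ) (τ : ℕ) :
    aacf L (fun k => a k * z ^ k) τ = aacf L a τ * z ^ (-(τ : ℤ)) := by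
  have hz0 : z ≠ 0 := norm_ne_zero_iff.mp (by simp [hz])
  rw [aacf, aacf, sum_mul]
  refine sum_congr rfl fun i _ => ?_
  rw [map_mul, map_pow, ← Complex.inv_eq_conj hz, zpow_neg, zpow_natCast, pow_add, inv_pow,
    inv_pow]
  field_simp

theorem stmt8_general (L S : ℕ) (hS : 0 < S) (a : ℕ → ℂ)
    (hunit : ∀ k < L, ‖a k‖ = 1)
    (ζ : ℂ) (hζ : ζ = Complex.exp (2 * (Real.pi : ℂ) * Complex.I / (S : ℂ)))
    (z : ℂ) (hz : ‖z‖ = 1) :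
    ∑ u ∈ Finset.range S,
      ‖∑ k ∈ Finset.range L, a k * ζ ^ (k * u) * z ^ k‖ ^ 2
      = (L : ℝ) * S + 2 * S *
        (∑ τ ∈ (Finset.Ioo 0 L).filter (fun τ => S ∣ τ),
          aacf L a τ * z ^ (-(τ : ℤ))).re := by
  have hprim : IsPrimitiveRoot ζ S := hζ ▸ Complex.isPrimitiveRoot_exp S hS.ne'
  have hnorm : ∑ k ∈ range L, ‖a k * z ^ k‖ ^ 2 = L := by
    rw [sum_congr rfl fun k hk => show ‖a k * z ^ k‖ ^ 2 = 1 by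
      simp [hunit k (mem_range.1 hk), hz], sum_const, card_range, nsmul_one]
  simp_rw [mul_right_comm _ (ζ ^ _), hprim.sum_range_norm_sq_eq_aacf hS.ne', hnorm,
    aacf_mul_pow hz]
  ring

theorem stmt8 (L S : ℕ) (hL : 0 < L) (hS : 0 < S) (a : ℕ → ℂ)
    (hunit : ∀ k < L, ‖a k‖ = 1)
    (ζ : ℂ) (hζ : ζ = Complex.exp (2 * (Real.pi : ℂ) * Complex.I / (S : ℂ)))
    (z : ℂ) (hz : ‖z‖ = 1) :
    ∑ u ∈ Finset.range S,
      ‖∑ k ∈ Finset.range L, a k * ζ ^ (k * u) * z ^ k‖ ^ 2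
      = (L : ℝ) * S + 2 * S *
        (∑ τ ∈ (Finset.Ioo 0 L).filter (fun τ => S ∣ τ),
          aacf L a τ * z ^ (-(τ : ℤ))).re :=
  stmt8_general L S hS a hunit ζ hζ z hz
end
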